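/- Gate-independent noise solves the decomposition equations: let d ≥ 2 and let (G, U) be a unitary 2-design. Let L and R be superoperators and suppose T(g) = L ∘ Ad(U g) ∘ R for all g ∈ G. Set t = tr((R∘L)(I_d))/d and p = (Tr(R∘L) − t)/(d² − 1), where Tr(R∘L) is the trace of R∘L as a ℂ-linear endomorphism of M_d(ℂ). Then all three equations hold: E_{g∈G}[T(g) ∘ L ∘ Ad(U g)⁻¹] = L ∘ D_{p,t}, E_{g∈G}[Ad(U g)⁻¹ ∘ R ∘ T(g)] = D_{p,t} ∘ R, and E_{g∈G}[Ad(U g) ∘ (R ∘ L) ∘ Ad(U g)⁻¹] = D_{p,t}. -/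

import Mathlib

noncomputable section

namespace RBPaper

abbrev Mat (d : ℕ) := Matrix (Fin d) (Fin d) ℂ

abbrev SuperOp (d : ℕ) := Module.End ℂ (Mat d)

/-- The superoperator `X ↦ U X Uᴴ` for a unitary `U`. -/
def Ad {d : ℕ} (U : Matrix.unitaryGroup (Fin d) ℂ) : SuperOp d :=
  LinearMap.mulLeft ℂ (U : Mat d) ∘ₗ LinearMap.mulRight ℂ (star (U : Mat d))

/-- The superoperator `X ↦ tr(X) • I`. -/
def traceMap (d : ℕ) : SuperOp d :=
  (Matrix.traceLinearMap (Fin d) ℂ ℂ).smulRight (1 : Mat d)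

/-- The depolarizing-type map `D_{p,t} : X ↦ (t/d)·tr(X)·I + p·(X − (tr(X)/d)·I)`. -/
def Dpt (d : ℕ) (p t : ℂ) : SuperOp d :=
  (t / d) • traceMap d + p • (LinearMap.id - (d : ℂ)⁻¹ • traceMap d)

/-- The projection `Π₀ : X ↦ X − (tr(X)/d)·I` onto traceless matrices. -/
def Pi0 (d : ℕ) : SuperOp d := LinearMap.id - (d : ℂ)⁻¹ • traceMap d

/-- Uniform average of a finitely-indexed family in a `ℂ`-module. -/
def expG {G : Type*} [Fintype G] {M : Type*} [AddCommMonoid M] [Module ℂ M]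
    (f : G → M) : M := (Fintype.card G : ℂ)⁻¹ • ∑ g, f g

/-- `(G, U)` is a unitary 2-design: the conjugation action has no nontrivial
invariant subspace of the traceless matrices. -/
def IsTwoDesign {d : ℕ} {G : Type*} [Group G] [Fintype G]
    (U : G →* Matrix.unitaryGroup (Fin d) ℂ) : Prop :=
  ∀ W : Submodule ℂ (Mat d),
    W ≤ LinearMap.ker (Matrix.traceLinearMap (Fin d) ℂ ℂ) →
    (∀ (g : G), ∀ X ∈ W, Ad (U g) X ∈ W) →
    W = ⊥ ∨ W = LinearMap.ker (Matrix.traceLinearMap (Fin d) ℂ ℂ)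


section Aux
variable {d : ℕ}

lemma Ad_apply (u : Matrix.unitaryGroup (Fin d) ℂ) (X : Mat d) :
    Ad u X = (u : Mat d) * X * star (u : Mat d) := (mul_assoc _ _ _).symm

lemma Ad_Ad (u v : Matrix.unitaryGroup (Fin d) ℂ) (X : Mat d) :
    Ad u (Ad v X) = Ad (u * v) X := by
  simp [Ad_apply, star_mul, mul_assoc]

lemma Ad_one : Ad (1 : Matrix.unitaryGroup (Fin d) ℂ) = LinearMap.id := by
  apply LinearMap.ext; intro X
  simp [Ad_apply]

lemma Ad_mul (u v : Matrix.unitaryGroup (Fin d) ℂ) :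
    Ad (u * v) = Ad u ∘ₗ Ad v := by
  apply LinearMap.ext; intro X
  simp [LinearMap.comp_apply, Ad_Ad]

lemma Ad_inv_comp (u : Matrix.unitaryGroup (Fin d) ℂ) :
    Ad u⁻¹ ∘ₗ Ad u = LinearMap.id := by
  rw [← Ad_mul, inv_mul_cancel, Ad_one]

lemma trace_Ad (u : Matrix.unitaryGroup (Fin d) ℂ) (X : Mat d) :
    (Ad u X).trace = X.trace := by
  rw [Ad_apply, Matrix.trace_mul_cycle,
    Matrix.UnitaryGroup.star_mul_self, one_mul]

lemma Ad_one_mat (u : Matrix.unitaryGroup (Fin d) ℂ) : Ad u (1 : Mat d) = 1 := by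
  rw [Ad_apply, mul_one]
  exact u.2.2

lemma traceMap_apply (X : Mat d) : traceMap d X = X.trace • 1 := rfl

lemma expG_map {G : Type*} [Fintype G] {M N : Type*} [AddCommMonoid M] [Module ℂ M]
    [AddCommMonoid N] [Module ℂ N] (A : M →ₗ[ℂ] N) (f : G → M) :
    A (expG f) = expG (fun g => A (f g)) := by
  simp [expG, map_smul, map_sum]

lemma expG_comp_left {G : Type*} [Fintype G] (A : SuperOp d) (f : G → SuperOp d) :
    A ∘ₗ expG f = expG (fun g => A ∘ₗ f g) := by
  apply LinearMap.ext; intro X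
  simp [expG, LinearMap.sum_apply, map_smul, map_sum, LinearMap.comp_apply]

lemma expG_comp_right {G : Type*} [Fintype G] (A : SuperOp d) (f : G → SuperOp d) :
    expG f ∘ₗ A = expG (fun g => f g ∘ₗ A) := by
  apply LinearMap.ext; intro X
  simp [expG, LinearMap.sum_apply, LinearMap.comp_apply]

lemma expG_apply {G : Type*} [Fintype G] (f : G → SuperOp d) (X : Mat d) :
    expG f X = expG (fun g => f g X) := by
  simp [expG, LinearMap.sum_apply]

lemma expG_const {G : Type*} [Fintype G] [Nonempty G] {M : Type*} [AddCommMonoid M]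
    [Module ℂ M] (x : M) : expG (fun _ : G => x) = x := by
  have h : (Fintype.card G : ℂ) ≠ 0 := Nat.cast_ne_zero.mpr Fintype.card_ne_zero
  simp only [expG, Finset.sum_const, Finset.card_univ]
  rw [← Nat.cast_smul_eq_nsmul ℂ, inv_smul_smul₀ h]

lemma expG_reindex {G : Type*} [Fintype G] {M : Type*} [AddCommMonoid M] [Module ℂ M]
    (e : G ≃ G) (f : G → M) : expG (fun g => f (e g)) = expG f := by
  simp only [expG]
  rw [Equiv.sum_comp e f]

lemma trace_traceMap (d : ℕ) :
    LinearMap.trace ℂ (Mat d) (traceMap d) = d := by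
  have h : traceMap d =
      (LinearMap.toSpanSingleton ℂ (Mat d) 1) ∘ₗ (Matrix.traceLinearMap (Fin d) ℂ ℂ) := by
    apply LinearMap.ext; intro X
    simp [traceMap_apply, LinearMap.toSpanSingleton_apply]
  rw [h, LinearMap.trace_comp_comm']
  have h2 : (Matrix.traceLinearMap (Fin d) ℂ ℂ) ∘ₗ LinearMap.toSpanSingleton ℂ (Mat d) 1
      = (d : ℂ) • LinearMap.id := by
    apply LinearMap.ext; intro c
    simp [LinearMap.toSpanSingleton_apply, Matrix.trace_smul, Matrix.trace_one, mul_comm]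
  rw [h2, map_smul, LinearMap.trace_id]
  simp

lemma trace_id_mat (d : ℕ) :
    LinearMap.trace ℂ (Mat d) LinearMap.id = (d * d : ℕ) := by
  rw [LinearMap.trace_id]
  norm_num [Module.finrank_matrix]

end Aux

/-- The key twirling lemma: averaging conjugation of any superoperator over a
2-design yields `Dpt d p t`. -/
lemma twirl_eq_Dpt {d : ℕ} (hd : 2 ≤ d) {G : Type*} [Group G] [Fintype G]
    (U : G →* Matrix.unitaryGroup (Fin d) ℂ) (hU : IsTwoDesign U)
    (M : SuperOp d) (t p : ℂ)
    (htdef : t = (M 1).trace / d)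
    (hpdef : p = (LinearMap.trace ℂ (Mat d) M - t) / ((d : ℂ) ^ 2 - 1)) :
    expG (fun g : G => Ad (U g) ∘ₗ M ∘ₗ Ad ((U g)⁻¹)) = Dpt d p t := by
  classical
  have : Nonempty G := ⟨1⟩
  have hd0 : (d : ℂ) ≠ 0 := Nat.cast_ne_zero.mpr (by omega)
  set Φ : SuperOp d := expG (fun g : G => Ad (U g) ∘ₗ M ∘ₗ Ad ((U g)⁻¹)) with hΦdef
  set Ktr : Submodule ℂ (Mat d) := LinearMap.ker (Matrix.traceLinearMap (Fin d) ℂ ℂ) with hKtr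
  have hmemK : ∀ X : Mat d, X ∈ Ktr ↔ X.trace = 0 := fun X => Iff.rfl
  -- commutation with the action
  have hcomm : ∀ h : G, ∀ X : Mat d, Ad (U h) (Φ X) = Φ (Ad (U h) X) := by
    intro h X
    have h1 : Ad (U h) (Φ X)
        = expG (fun g : G => Ad (U h) ((Ad (U g) ∘ₗ M ∘ₗ Ad ((U g)⁻¹)) X)) := by
      rw [hΦdef, expG_apply, expG_map]
    have h2 : Φ (Ad (U h) X)
        = expG (fun g : G => (Ad (U g) ∘ₗ M ∘ₗ Ad ((U g)⁻¹)) (Ad (U h) X)) := by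
      rw [hΦdef, expG_apply]
    rw [h1, h2, ← expG_reindex (Equiv.mulLeft h)
      (fun g : G => (Ad (U g) ∘ₗ M ∘ₗ Ad ((U g)⁻¹)) (Ad (U h) X))]
    congr 1; funext g
    simp only [LinearMap.comp_apply, Equiv.coe_mulLeft, map_mul, map_inv, Ad_Ad,
      mul_inv_rev, inv_mul_cancel_right]
  -- trace of Φ X equals average of traces of M (Ad⁻¹ X)
  have htrΦ : ∀ X : Mat d, (Φ X).trace
      = expG (fun g : G => (M (Ad ((U g)⁻¹) X)).trace) := by
    intro X
    have h := expG_map (Matrix.traceLinearMap (Fin d) ℂ ℂ)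
      (fun g : G => (Ad (U g) ∘ₗ M ∘ₗ Ad ((U g)⁻¹)) X)
    simp only [Matrix.traceLinearMap_apply] at h
    rw [hΦdef, expG_apply, h]
    congr 1; funext g
    simp only [LinearMap.comp_apply, trace_Ad]
  -- Step A : Φ 1 = t • 1
  have htrΦ1 : (Φ 1).trace = (M 1).trace := by
    rw [htrΦ]
    have : ∀ g : G, (M (Ad ((U g)⁻¹) 1)).trace = (M 1).trace := by
      intro g; rw [Ad_one_mat]
    simp only [this]
    exact expG_const _
  have hΦ1 : Φ 1 = t • 1 := by
    set Y : Mat d := Φ 1 - ((M 1).trace / d) • 1 with hY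
    have hYtr : Y.trace = 0 := by
      simp only [hY, Matrix.trace_sub, Matrix.trace_smul, Matrix.trace_one, htrΦ1,
        smul_eq_mul, Fintype.card_fin]
      field_simp
      ring
    have hYinv : ∀ g : G, Ad (U g) Y = Y := by
      intro g
      simp only [hY, map_sub, map_smul, Ad_one_mat, hcomm, Ad_one_mat]
    have hY0 : Y = 0 := by
      by_contra hY0
      have hsp : Submodule.span ℂ {Y} ≤ Ktr := by
        rw [Submodule.span_le, Set.singleton_subset_iff]
        exact (hmemK Y).mpr hYtr
      have hinv : ∀ g : G, ∀ X ∈ Submodule.span ℂ {Y}, Ad (U g) X ∈ Submodule.span ℂ {Y} := by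
        intro g X hX
        obtain ⟨c, rfl⟩ := Submodule.mem_span_singleton.mp hX
        rw [map_smul, hYinv]
        exact Submodule.smul_mem _ _ (Submodule.mem_span_singleton_self Y)
      rcases hU _ hsp hinv with hbot | htop
      · have hYmem : Y ∈ Submodule.span ℂ {Y} := Submodule.mem_span_singleton_self Y
        rw [hbot] at hYmem
        exact hY0 ((Submodule.mem_bot ℂ).mp hYmem)
      · -- span {Y} = ker trace is impossible : two independent traceless matrices
        have h2d : (1 : ℕ) < d := by omega
        set i0 : Fin d := ⟨0, by omega⟩
        set i1 : Fin d := ⟨1, by omega⟩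
        have hne : i0 ≠ i1 := by simp [i0, i1, Fin.ext_iff]
        have hE01 : Matrix.single i0 i1 (1 : ℂ) ∈ Submodule.span ℂ {Y} := by
          rw [htop]
          exact (hmemK _).mpr (Matrix.trace_single_eq_of_ne _ _ _ hne)
        have hE10 : Matrix.single i1 i0 (1 : ℂ) ∈ Submodule.span ℂ {Y} := by
          rw [htop]
          exact (hmemK _).mpr (Matrix.trace_single_eq_of_ne _ _ _ hne.symm)
        obtain ⟨a, ha⟩ := Submodule.mem_span_singleton.mp hE01
        obtain ⟨b, hb⟩ := Submodule.mem_span_singleton.mp hE10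
        have hab : b • Matrix.single i0 i1 (1 : ℂ)
            = a • Matrix.single i1 i0 (1 : ℂ) := by
          rw [← ha, ← hb, smul_smul, smul_smul, mul_comm]
        have hb0 : b = 0 := by
          have := congrFun (congrFun hab i0) i1
          simpa [Matrix.smul_apply, Matrix.single_apply_same,
            Matrix.single_apply_of_ne (by tauto), hne] using this
        have : (0 : ℂ) = 1 := by
          have h1 := congrFun (congrFun hb i1) i0
          rw [hb0] at h1
          simpa [Matrix.smul_apply, Matrix.single_apply_same] using h1
        exact one_ne_zero this.symm
    have : Φ 1 = ((M 1).trace / d) • 1 := by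
      have := sub_eq_zero.mp hY0
      simpa [hY] using this
    rw [this, htdef]
  -- Step B : the trace of Φ X vanishes for traceless X
  have hftr : ∀ X : Mat d, X.trace = 0 → (Φ X).trace = 0 := by
    by_contra hc
    push_neg at hc
    obtain ⟨X₀, hX₀tr, hX₀⟩ := hc
    set gmap : Mat d →ₗ[ℂ] ℂ × ℂ :=
      (Matrix.traceLinearMap (Fin d) ℂ ℂ).prod
        ((Matrix.traceLinearMap (Fin d) ℂ ℂ) ∘ₗ Φ) with hgmap
    set W : Submodule ℂ (Mat d) := LinearMap.ker gmap with hWdef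
    have hWmem : ∀ X : Mat d, X ∈ W ↔ X.trace = 0 ∧ (Φ X).trace = 0 := by
      intro X
      simp [hWdef, hgmap, LinearMap.mem_ker, Prod.ext_iff]
    have hWle : W ≤ Ktr := fun X hX => (hmemK X).mpr ((hWmem X).mp hX).1
    have hWinv : ∀ g : G, ∀ X ∈ W, Ad (U g) X ∈ W := by
      intro g X hX
      obtain ⟨h1, h2⟩ := (hWmem X).mp hX
      refine (hWmem _).mpr ⟨by rw [trace_Ad, h1], ?_⟩
      rw [← hcomm, trace_Ad, h2]
    rcases hU _ hWle hWinv with hbot | htop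
    · have hrk := gmap.finrank_range_add_finrank_ker
      have hfr : Module.finrank ℂ (Mat d) = d * d := by
        simp [Module.finrank_matrix]
      have hle : Module.finrank ℂ (LinearMap.range gmap) ≤ 2 := by
        have h2 := Submodule.finrank_le (LinearMap.range gmap)
        simpa using h2
      rw [← hWdef, hbot] at hrk
      simp only [finrank_bot, add_zero, hfr] at hrk
      have h4 : 4 ≤ d * d := Nat.mul_le_mul hd hd
      omega
    · have hX₀W : X₀ ∈ W := by
        rw [htop]
        exact (hmemK X₀).mpr hX₀tr
      exact hX₀ ((hWmem X₀).mp hX₀W).2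
  -- Step C : eigenvalue on the traceless part
  have hmapsto : ∀ X : Mat d, X ∈ Ktr → Φ X ∈ Ktr := fun X hX =>
    (hmemK _).mpr (hftr X ((hmemK X).mp hX))
  haveI : Nontrivial Ktr := by
    have hne : (⟨0, by omega⟩ : Fin d) ≠ ⟨1, by omega⟩ := by simp [Fin.ext_iff]
    refine nontrivial_of_ne
      ⟨Matrix.single ⟨0, by omega⟩ ⟨1, by omega⟩ (1 : ℂ),
        (hmemK _).mpr (Matrix.trace_single_eq_of_ne _ _ _ hne)⟩ 0 ?_
    intro h
    have h2 := congrArg Subtype.val h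
    have h1 := congrFun (congrFun h2 ⟨0, by omega⟩) ⟨1, by omega⟩
    simp [Matrix.single_apply_same] at h1
  set F : Module.End ℂ Ktr := Φ.restrict hmapsto with hF
  obtain ⟨lam, hlam⟩ := Module.End.exists_eigenvalue F
  obtain ⟨v, hv⟩ := hlam.exists_hasEigenvector
  set Wev : Submodule ℂ (Mat d) := (Module.End.eigenspace F lam).map Ktr.subtype with hWev
  have hWevmem : ∀ X : Mat d, X ∈ Wev ↔ X ∈ Ktr ∧ Φ X = lam • X := by
    intro X
    constructor
    · rintro ⟨e, he, rfl⟩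
      refine ⟨e.2, ?_⟩
      have h3 := congrArg Subtype.val (Module.End.mem_eigenspace_iff.mp he)
      simp only [hF, LinearMap.restrict_coe_apply, SetLike.val_smul] at h3
      exact h3
    · rintro ⟨hX, hE⟩
      exact ⟨⟨X, hX⟩, Module.End.mem_eigenspace_iff.mpr
        (Subtype.ext (by
          simp only [hF, LinearMap.restrict_coe_apply, SetLike.val_smul]
          exact hE)), rfl⟩
  have hWevle : Wev ≤ Ktr := fun X hX => ((hWevmem X).mp hX).1
  have hWevinv : ∀ g : G, ∀ X ∈ Wev, Ad (U g) X ∈ Wev := by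
    intro g X hX
    obtain ⟨hX1, hX2⟩ := (hWevmem X).mp hX
    refine (hWevmem _).mpr ⟨(hmemK _).mpr (by rw [trace_Ad]; exact (hmemK X).mp hX1), ?_⟩
    rw [← hcomm, hX2, map_smul]
  have hWevne : Wev ≠ ⊥ := by
    intro h
    have hvmem : (v : Mat d) ∈ Wev := ⟨v, hv.1, rfl⟩
    rw [h] at hvmem
    exact hv.2 (Subtype.ext ((Submodule.mem_bot ℂ).mp hvmem))
  have htopW : Wev = Ktr := (hU _ hWevle hWevinv).resolve_left hWevne
  have hΦ0 : ∀ X : Mat d, X.trace = 0 → Φ X = lam • X := by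
    intro X hX
    have hXW : X ∈ Wev := by rw [htopW]; exact (hmemK X).mpr hX
    exact ((hWevmem X).mp hXW).2
  -- Step D : Φ = Dpt d lam t
  have hkey : Φ = Dpt d lam t := by
    apply LinearMap.ext; intro X
    have htr0 : (X - (X.trace / d) • (1 : Mat d)).trace = 0 := by
      simp only [Matrix.trace_sub, Matrix.trace_smul, Matrix.trace_one, smul_eq_mul, Fintype.card_fin]
      field_simp
      ring
    calc Φ X = (X.trace / d) • Φ 1 + Φ (X - (X.trace / d) • 1) := by
          rw [← map_smul, ← map_add]
          congr 1
          abel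
      _ = (X.trace / d) • (t • 1) + lam • (X - (X.trace / d) • 1) := by
          rw [hΦ1, hΦ0 _ htr0]
      _ = Dpt d lam t X := by
          simp only [Dpt, LinearMap.add_apply, LinearMap.smul_apply, LinearMap.sub_apply,
            LinearMap.id_apply, traceMap_apply]
          match_scalars <;> field_simp <;> ring
  -- Step E : lam = p
  have htrΦM : LinearMap.trace ℂ (Mat d) Φ = LinearMap.trace ℂ (Mat d) M := by
    rw [hΦdef, expG_map (LinearMap.trace ℂ (Mat d))]
    have hterm : ∀ g : G, LinearMap.trace ℂ (Mat d) (Ad (U g) ∘ₗ M ∘ₗ Ad ((U g)⁻¹))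
        = LinearMap.trace ℂ (Mat d) M := by
      intro g
      have h3 : Ad ((U g)⁻¹) * Ad (U g) = (1 : SuperOp d) := by
        rw [Module.End.mul_eq_comp, Ad_inv_comp, Module.End.one_eq_id]
      have h1 : Ad (U g) ∘ₗ M ∘ₗ Ad ((U g)⁻¹) = Ad (U g) * (M * Ad ((U g)⁻¹)) := rfl
      rw [h1, LinearMap.trace_mul_comm, mul_assoc, h3, mul_one]
    simp only [hterm]
    exact expG_const _
  have htrD : LinearMap.trace ℂ (Mat d) (Dpt d lam t) = t + lam * ((d : ℂ) ^ 2 - 1) := by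
    simp only [Dpt, map_add, map_smul, map_sub, trace_traceMap, trace_id_mat, smul_eq_mul]
    have hdd : ((d * d : ℕ) : ℂ) = (d : ℂ) ^ 2 := by push_cast; ring
    rw [hdd, div_mul_cancel₀ t hd0, inv_mul_cancel₀ hd0]
  have hd2ne : ((d : ℂ) ^ 2 - 1) ≠ 0 := by
    intro h
    have h1 : ((d : ℂ)) ^ 2 = 1 := by
      have := sub_eq_zero.mp h
      linear_combination this
    have h2 : ((d ^ 2 : ℕ) : ℂ) = ((1 : ℕ) : ℂ) := by push_cast; linear_combination h1
    have h3 : d ^ 2 = 1 := Nat.cast_injective h2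
    nlinarith
  have hlamp : p = lam := by
    rw [hpdef, ← htrΦM, hkey, htrD]
    field_simp
    ring
  rw [hlamp]
  exact hkey


/-- Gate-independent noise `T(g) = L ∘ Ad(U g) ∘ R` solves the
three decomposition equations with `t = tr((R∘L)(I))/d` and
`p = (Tr(R∘L) − t)/(d² − 1)`. -/
theorem gate_independent_solution {d : ℕ} (hd : 2 ≤ d) {G : Type*} [Group G] [Fintype G]
    (U : G →* Matrix.unitaryGroup (Fin d) ℂ) (hU : IsTwoDesign U)
    (L R : SuperOp d) (T : G → SuperOp d)
    (hT : ∀ g : G, T g = L ∘ₗ Ad (U g) ∘ₗ R)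
    (t p : ℂ)
    (htdef : t = ((R ∘ₗ L) 1).trace / d)
    (hpdef : p = (LinearMap.trace ℂ (Mat d) (R ∘ₗ L) - t) / ((d : ℂ) ^ 2 - 1)) :
    expG (fun g : G => T g ∘ₗ L ∘ₗ Ad ((U g)⁻¹)) = L ∘ₗ Dpt d p t ∧
      expG (fun g : G => Ad ((U g)⁻¹) ∘ₗ R ∘ₗ T g) = Dpt d p t ∘ₗ R ∧
      expG (fun g : G => Ad (U g) ∘ₗ (R ∘ₗ L) ∘ₗ Ad ((U g)⁻¹)) = Dpt d p t := by
  have : Nonempty G := ⟨1⟩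
  have hkey := twirl_eq_Dpt hd U hU (R ∘ₗ L) t p htdef hpdef
  refine ⟨?_, ?_, hkey⟩
  · have hfun : (fun g : G => T g ∘ₗ L ∘ₗ Ad ((U g)⁻¹))
        = fun g : G => L ∘ₗ (Ad (U g) ∘ₗ (R ∘ₗ L) ∘ₗ Ad ((U g)⁻¹)) := by
      funext g
      apply LinearMap.ext; intro X
      simp only [hT, LinearMap.comp_apply]
    rw [hfun, ← expG_comp_left, hkey]
  · have hfun : (fun g : G => Ad ((U g)⁻¹) ∘ₗ R ∘ₗ T g)
        = fun g : G => (Ad (U g⁻¹) ∘ₗ (R ∘ₗ L) ∘ₗ Ad ((U g⁻¹)⁻¹)) ∘ₗ R := by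
      funext g
      apply LinearMap.ext; intro X
      simp only [hT, LinearMap.comp_apply, map_inv, inv_inv]
    rw [hfun]
    rw [show (fun g : G => (Ad (U g⁻¹) ∘ₗ (R ∘ₗ L) ∘ₗ Ad ((U g⁻¹)⁻¹)) ∘ₗ R)
        = (fun g : G => ((Ad (U ((Equiv.inv G) g)) ∘ₗ (R ∘ₗ L)
            ∘ₗ Ad ((U ((Equiv.inv G) g))⁻¹)) ∘ₗ R)) from rfl]
    rw [expG_reindex (Equiv.inv G)
      (fun g : G => (Ad (U g) ∘ₗ (R ∘ₗ L) ∘ₗ Ad ((U g)⁻¹)) ∘ₗ R)]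
    rw [← expG_comp_right, hkey]


end RBPaper
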